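/- Let S, A be finite nonempty types, P_tr and P_te transition kernels, π a policy, d0 an initial distribution, and γ a discount factor with 0 ≤ γ < 1. Suppose d_tr : S → A → ℝ satisfies the Bellman flow equation for (P_tr, π, d0, γ) and d_te : S → A → ℝ satisfies the Bellman flow equation for (P_te, π, d0, γ). Let μ : S → A → ℝ satisfy μ s a > 0 for all s, a, and define β s a := d_tr s a / μ s a. If w : S → A → ℝ satisfies, for every q : S → A → ℝ, ∑_{s,a,s'} μ s a * P_te s a s' * w s a * β s a * (q s a − γ * q(s', π)) − (1 − γ) * ∑_{s} d0 s * q(s, π) = 0, then w s a * d_tr s a = d_te s a for all s, a. -/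

import Mathlib

/-!
Testing the loss against `q` pairs `q` with the Bellman residual of `g := w * d_tr` for the test
kernel, so taking `q` to be that residual shows that `g` satisfies the Bellman flow equation of
`d_te`. That equation has a unique solution: the difference of two solutions is a fixed point of
`γ` times a stochastic one-step map, which is non-expansive in `ℓ¹`, so it vanishes when `|γ| < 1`.
-/

open Finset

namespace MarkovDecisionProcess

variable {S A : Type*} [Fintype S] [Fintype A]

/-- The state-action flow after one transition under `P` followed by an action drawn from `π`. -/
def pushforward (P : S → A → S → ℝ) (π : S → A → ℝ) (F : S → A → ℝ) (s : S) (a : A) : ℝ :=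
  π s a * ∑ sb, ∑ ab, P sb ab s * F sb ab

def IsBellmanFlow (P : S → A → S → ℝ) (π : S → A → ℝ) (d0 : S → ℝ) (γ : ℝ)
    (d : S → A → ℝ) : Prop :=
  ∀ s a, d s a = (1 - γ) * d0 s * π s a + γ * π s a * ∑ sb, ∑ ab, P sb ab s * d sb ab

def bellmanResidual (P : S → A → S → ℝ) (π : S → A → ℝ) (d0 : S → ℝ) (γ : ℝ)
    (d : S → A → ℝ) (s : S) (a : A) : ℝ :=
  d s a - ((1 - γ) * d0 s * π s a + γ * π s a * ∑ sb, ∑ ab, P sb ab s * d sb ab)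

/-- The MIS loss `L(w, β, q)`, written in terms of the weight `g = μ * w * β`. -/
def misLoss (P : S → A → S → ℝ) (π : S → A → ℝ) (d0 : S → ℝ) (γ : ℝ) (g q : S → A → ℝ) : ℝ :=
  (∑ s, ∑ a, ∑ s', g s a * P s a s' * (q s a - γ * ∑ a', π s' a' * q s' a'))
    - (1 - γ) * ∑ s, d0 s * ∑ a, π s a * q s a

variable {P : S → A → S → ℝ} {π : S → A → ℝ} {d0 : S → ℝ} {γ : ℝ}

theorem sum_abs_pushforward_le (hP : ∀ s a s', 0 ≤ P s a s') (hP1 : ∀ s a, ∑ s', P s a s' = 1)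
    (hπ : ∀ s a, 0 ≤ π s a) (hπ1 : ∀ s, ∑ a, π s a = 1) (F : S → A → ℝ) :
    ∑ s, ∑ a, |pushforward P π F s a| ≤ ∑ s, ∑ a, |F s a| :=
  calc ∑ s, ∑ a, |pushforward P π F s a|
      = ∑ s, |∑ sb, ∑ ab, P sb ab s * F sb ab| := by
        refine sum_congr rfl fun s _ => ?_
        simp only [pushforward, abs_mul, abs_of_nonneg (hπ s _), ← sum_mul, hπ1, one_mul]
    _ ≤ ∑ s, ∑ sb, ∑ ab, P sb ab s * |F sb ab| := by
        gcongr with s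
        refine (abs_sum_le_sum_abs _ _).trans (sum_le_sum fun sb _ => ?_)
        refine (abs_sum_le_sum_abs _ _).trans_eq (sum_congr rfl fun ab _ => ?_)
        rw [abs_mul, abs_of_nonneg (hP _ _ _)]
    _ = ∑ sb, ∑ ab, (∑ s, P sb ab s) * |F sb ab| := by
        rw [sum_comm]
        refine sum_congr rfl fun sb _ => ?_
        rw [sum_comm]
        simp only [sum_mul]
    _ = ∑ s, ∑ a, |F s a| := by simp only [hP1, one_mul]

theorem eq_zero_of_eq_mul_pushforward (hP : ∀ s a s', 0 ≤ P s a s')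
    (hP1 : ∀ s a, ∑ s', P s a s' = 1) (hπ : ∀ s a, 0 ≤ π s a) (hπ1 : ∀ s, ∑ a, π s a = 1)
    (hγ : |γ| < 1) {F : S → A → ℝ} (hF : ∀ s a, F s a = γ * pushforward P π F s a) :
    F = 0 := by
  set N := ∑ s, ∑ a, |F s a|
  have hN : N ≤ |γ| * N :=
    calc N = |γ| * ∑ s, ∑ a, |pushforward P π F s a| := by
          simp only [N, mul_sum]
          exact sum_congr rfl fun s _ => sum_congr rfl fun a _ => by rw [hF s a, abs_mul]
      _ ≤ |γ| * N := by gcongr; exact sum_abs_pushforward_le hP hP1 hπ hπ1 F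
  have hN0 : N = 0 := by nlinarith [show 0 ≤ N by positivity]
  ext s a
  have hrow := (sum_eq_zero_iff_of_nonneg fun s _ => by positivity).1 hN0 s (mem_univ s)
  exact abs_eq_zero.1 ((sum_eq_zero_iff_of_nonneg fun a _ => abs_nonneg _).1 hrow a (mem_univ a))

theorem IsBellmanFlow.unique (hP : ∀ s a s', 0 ≤ P s a s') (hP1 : ∀ s a, ∑ s', P s a s' = 1)
    (hπ : ∀ s a, 0 ≤ π s a) (hπ1 : ∀ s, ∑ a, π s a = 1) (hγ : |γ| < 1) {d d' : S → A → ℝ}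
    (hd : IsBellmanFlow P π d0 γ d) (hd' : IsBellmanFlow P π d0 γ d') : d = d' := by
  have hdiff : ∀ s a, (d - d') s a = γ * pushforward P π (d - d') s a := by
    intro s a
    simp only [pushforward, Pi.sub_apply, mul_sub, sum_sub_distrib]
    rw [hd s a, hd' s a]
    ring
  exact sub_eq_zero.1 (eq_zero_of_eq_mul_pushforward hP hP1 hπ hπ1 hγ hdiff)

theorem misLoss_eq_sum_bellmanResidual_mul (hP1 : ∀ s a, ∑ s', P s a s' = 1)
    (g q : S → A → ℝ) :
    misLoss P π d0 γ g q = ∑ s, ∑ a, bellmanResidual P π d0 γ g s a * q s a := by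
  have hcurrent : ∑ s, ∑ a, ∑ s', g s a * P s a s' * q s a = ∑ s, ∑ a, g s a * q s a := by
    simp only [← sum_mul, ← mul_sum, hP1, mul_one]
  have hnext : ∑ s, ∑ a, ∑ s', g s a * P s a s' * (γ * ∑ a', π s' a' * q s' a')
      = ∑ s, ∑ a, γ * π s a * (∑ sb, ∑ ab, P sb ab s * g sb ab) * q s a := by
    simp only [mul_sum, sum_mul]
    rw [sum_comm_cycle]
    refine sum_congr rfl fun s _ => ?_
    rw [sum_comm_cycle]
    exact sum_congr rfl fun a _ => sum_congr rfl fun sb _ => sum_congr rfl fun ab _ => by ring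
  have hinit : (1 - γ) * ∑ s, d0 s * ∑ a, π s a * q s a
      = ∑ s, ∑ a, (1 - γ) * d0 s * π s a * q s a := by
    simp only [mul_sum]
    exact sum_congr rfl fun s _ => sum_congr rfl fun a _ => by ring
  simp only [misLoss, bellmanResidual, mul_sub, sum_sub_distrib, hcurrent, hnext, hinit,
    sub_mul, add_mul, sum_add_distrib]
  ring

theorem isBellmanFlow_of_forall_misLoss_eq_zero (hP1 : ∀ s a, ∑ s', P s a s' = 1)
    {g : S → A → ℝ} (hg : ∀ q, misLoss P π d0 γ g q = 0) : IsBellmanFlow P π d0 γ g := by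
  set r := bellmanResidual P π d0 γ g
  have hr : ∑ s, ∑ a, r s a * r s a = 0 := by
    rw [← misLoss_eq_sum_bellmanResidual_mul hP1, hg]
  intro s a
  have hrow := (sum_eq_zero_iff_of_nonneg fun s _ =>
    sum_nonneg fun a _ => mul_self_nonneg (r s a)).1 hr s (mem_univ s)
  have hsa := (sum_eq_zero_iff_of_nonneg fun a _ => mul_self_nonneg (r s a)).1 hrow a (mem_univ a)
  exact sub_eq_zero.1 (mul_self_eq_zero.1 hsa)

end MarkovDecisionProcess

open MarkovDecisionProcess in
theorem mis_loss_zero_implies_true_ratio_general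
    {S A : Type*} [Fintype S] [Fintype A]
    (Pte : S → A → S → ℝ) (π : S → A → ℝ) (d0 : S → ℝ) (γ : ℝ)
    (hPte_nonneg : ∀ s a s', 0 ≤ Pte s a s')
    (hPte_sum : ∀ s a, ∑ s', Pte s a s' = 1)
    (hπ_nonneg : ∀ s a, 0 ≤ π s a) (hπ_sum : ∀ s, ∑ a, π s a = 1)
    (hγ0 : 0 ≤ γ) (hγ1 : γ < 1)
    (dtr dte : S → A → ℝ)
    (hdte : ∀ s a, dte s a
      = (1 - γ) * d0 s * π s a + γ * π s a * ∑ sb, ∑ ab, Pte sb ab s * dte sb ab)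
    (μ : S → A → ℝ) (hμ : ∀ s a, 0 < μ s a)
    (β : S → A → ℝ) (hβ : ∀ s a, β s a = dtr s a / μ s a)
    (w : S → A → ℝ)
    (hloss : ∀ q : S → A → ℝ,
      (∑ s, ∑ a, ∑ s', μ s a * Pte s a s' * w s a * β s a *
          (q s a - γ * ∑ a', π s' a' * q s' a'))
        - (1 - γ) * ∑ s, d0 s * ∑ a, π s a * q s a = 0) :
    ∀ s a, w s a * dtr s a = dte s a := by
  have hweight : ∀ s a s', μ s a * Pte s a s' * w s a * β s a = w s a * dtr s a * Pte s a s' := by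
    intro s a s'
    rw [hβ, mul_div_assoc', div_eq_iff (hμ s a).ne']
    ring
  have hflow : IsBellmanFlow Pte π d0 γ (fun s a => w s a * dtr s a) := by
    refine isBellmanFlow_of_forall_misLoss_eq_zero hPte_sum fun q => ?_
    simpa only [misLoss, hweight] using hloss q
  have hγ : |γ| < 1 := abs_lt.2 ⟨by linarith, hγ1⟩
  exact congrFun₂ (hflow.unique hPte_nonneg hPte_sum hπ_nonneg hπ_sum hγ hdte)

/-- Uniqueness for the MIS loss: if the loss `L_w(w, β, q)` with `β = d_tr/μ`
vanishes for every discriminator `q`, then `w * d_tr = d_te`, i.e. `w` is the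
density ratio of the two occupancies. -/
theorem mis_loss_zero_implies_true_ratio
    {S A : Type*} [Fintype S] [Fintype A] [Nonempty S] [Nonempty A]
    (Ptr Pte : S → A → S → ℝ) (π : S → A → ℝ) (d0 : S → ℝ) (γ : ℝ)
    (hPtr_nonneg : ∀ s a s', 0 ≤ Ptr s a s')
    (hPtr_sum : ∀ s a, ∑ s', Ptr s a s' = 1)
    (hPte_nonneg : ∀ s a s', 0 ≤ Pte s a s')
    (hPte_sum : ∀ s a, ∑ s', Pte s a s' = 1)
    (hπ_nonneg : ∀ s a, 0 ≤ π s a) (hπ_sum : ∀ s, ∑ a, π s a = 1)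
    (hd0_nonneg : ∀ s, 0 ≤ d0 s) (hd0_sum : ∑ s, d0 s = 1)
    (hγ0 : 0 ≤ γ) (hγ1 : γ < 1)
    (dtr dte : S → A → ℝ)
    (hdtr : ∀ s a, dtr s a
      = (1 - γ) * d0 s * π s a + γ * π s a * ∑ sb, ∑ ab, Ptr sb ab s * dtr sb ab)
    (hdte : ∀ s a, dte s a
      = (1 - γ) * d0 s * π s a + γ * π s a * ∑ sb, ∑ ab, Pte sb ab s * dte sb ab)
    (μ : S → A → ℝ) (hμ : ∀ s a, 0 < μ s a)
    (β : S → A → ℝ) (hβ : ∀ s a, β s a = dtr s a / μ s a)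
    (w : S → A → ℝ)
    (hloss : ∀ q : S → A → ℝ,
      (∑ s, ∑ a, ∑ s', μ s a * Pte s a s' * w s a * β s a *
          (q s a - γ * ∑ a', π s' a' * q s' a'))
        - (1 - γ) * ∑ s, d0 s * ∑ a, π s a * q s a = 0) :
    ∀ s a, w s a * dtr s a = dte s a :=
  mis_loss_zero_implies_true_ratio_general Pte π d0 γ hPte_nonneg hPte_sum hπ_nonneg hπ_sum hγ0 hγ1
    dtr dte hdte μ hμ β hβ w hloss
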